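/- arXiv:0906.4397 — 7 statements merged into one kernel-verified Lean document; each statement's English description precedes it below -/
import Mathlib

section
/- Let ∇ be a symplectic self-duality of a finite abelian group L. If there exist isotropic subgroups L₁ and L₂ of L with L the internal direct product L₁ × L₂, then there is an isomorphism φ : L₁ × dual(L₁) → L carrying the standard symplectic self-duality to ∇ and mapping L₁ × 0 onto L₁. -/
/-- ℚ/ℤ, the dualizing object for finite abelian groups. -/
abbrev QZ : Type := AddCircle (1 : ℚ)

/-!
Pairing `L₂` against `L₁` through `∇` identifies `L₂` with the dual of `L₁`: the map is
injective because an element of `L₂` orthogonal to `L₁` is also orthogonal to the isotropic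
`L₂`, hence to `L = L₁ ⊕ L₂`, and surjective because a character of `L₁`, extended by zero on
`L₂`, is `∇ z` for some `z`, whose `L₂`-component induces the same character on the isotropic
`L₁`. Then `φ (a, χ) = a + ψ⁻¹ χ`, and isotropy together with `∇ x y = -∇ y x` leaves exactly
the two cross terms of the standard form.
-/

namespace AddSubgroup

variable {G : Type*} [AddCommGroup G] {H K : AddSubgroup G}

theorem bijective_coprod_subtype_of_isCompl (h : IsCompl H K) :
    Function.Bijective (H.subtype.coprod K.subtype) := by
  constructor
  · rw [injective_iff_map_eq_zero]
    rintro ⟨x, y⟩ hxy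
    have hxy' : (x : G) = -y := eq_neg_of_add_eq_zero_left hxy
    have hx : (x : G) = 0 := disjoint_def.1 h.disjoint x.2 (hxy' ▸ neg_mem y.2)
    have hy : (y : G) = 0 := by simpa [hx] using hxy'
    simp [Prod.ext_iff, Subtype.ext_iff, hx, hy]
  · intro z
    obtain ⟨a, ha, b, hb, rfl⟩ := mem_sup.1 (h.sup_eq_top ▸ mem_top z)
    exact ⟨(⟨a, ha⟩, ⟨b, hb⟩), rfl⟩

noncomputable def prodEquivOfIsCompl (h : IsCompl H K) : (H × K) ≃+ G :=
  AddEquiv.ofBijective _ (bijective_coprod_subtype_of_isCompl h)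

@[simp]
theorem prodEquivOfIsCompl_apply (h : IsCompl H K) (x : H × K) :
    prodEquivOfIsCompl h x = x.1 + x.2 :=
  rfl

theorem prodEquivOfIsCompl_symm_apply_of_mem (h : IsCompl H K) {x : G} (hx : x ∈ H) :
    (prodEquivOfIsCompl h).symm x = (⟨x, hx⟩, 0) := by
  simp [AddEquiv.symm_apply_eq]

end AddSubgroup

namespace AddMonoidHom

variable {L M : Type*} [AddCommGroup L] [AddCommGroup M] {B : L →+ L →+ M} {H K : AddSubgroup L}

theorem apply_swap_eq_neg_of_apply_self_eq_zero (hB : ∀ x, B x x = 0) (x y : L) :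
    B y x = -B x y := by
  have h := hB (x + y)
  simp only [map_add, add_apply, hB, zero_add, add_zero] at h
  exact eq_neg_of_add_eq_zero_left h

variable (B H K) in
def restrictPairing : K →+ H →+ M :=
  (B.compl₂ H.subtype).comp K.subtype

theorem injective_restrictPairing (hB : Function.Injective B)
    (hK : ∀ x ∈ K, ∀ y ∈ K, B x y = 0) (hHK : H ⊔ K = ⊤) :
    Function.Injective (B.restrictPairing H K) := by
  rw [injective_iff_map_eq_zero]
  intro y hy
  have hker : H ⊔ K ≤ (B y).ker :=
    sup_le (fun x hx => (B y).mem_ker.2 (DFunLike.congr_fun hy ⟨x, hx⟩))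
      (fun x hx => (B y).mem_ker.2 (hK _ y.2 _ hx))
  have hBy : B y = 0 := by
    ext x
    exact hker (hHK ▸ AddSubgroup.mem_top x)
  exact Subtype.ext ((injective_iff_map_eq_zero B).1 hB _ hBy)

theorem surjective_restrictPairing (hB : Function.Surjective B)
    (hH : ∀ x ∈ H, ∀ y ∈ H, B x y = 0) (hHK : IsCompl H K) :
    Function.Surjective (B.restrictPairing H K) := by
  intro χ
  let e := AddSubgroup.prodEquivOfIsCompl hHK
  -- `χ` extended by zero on `K`
  obtain ⟨z, hz⟩ := hB (χ.comp ((fst H K).comp e.symm.toAddMonoidHom))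
  refine ⟨(e.symm z).2, ?_⟩
  ext x
  have hzx : B z x = χ x := by
    simp [hz, AddSubgroup.prodEquivOfIsCompl_symm_apply_of_mem hHK x.2, e]
  have hz_split : z = (e.symm z).1 + (e.symm z).2 := (e.apply_symm_apply z).symm
  rw [hz_split, map_add, add_apply, hH _ (e.symm z).1.2 _ x.2, zero_add] at hzx
  exact hzx

variable (B H K) in
noncomputable def restrictPairingEquiv (hB : Function.Bijective B)
    (hH : ∀ x ∈ H, ∀ y ∈ H, B x y = 0) (hK : ∀ x ∈ K, ∀ y ∈ K, B x y = 0)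
    (hHK : IsCompl H K) : K ≃+ (H →+ M) :=
  AddEquiv.ofBijective (B.restrictPairing H K)
    ⟨injective_restrictPairing hB.1 hK hHK.sup_eq_top, surjective_restrictPairing hB.2 hH hHK⟩

theorem apply_restrictPairingEquiv_symm_apply (hB : Function.Bijective B)
    (hH : ∀ x ∈ H, ∀ y ∈ H, B x y = 0) (hK : ∀ x ∈ K, ∀ y ∈ K, B x y = 0)
    (hHK : IsCompl H K) (χ : H →+ M) (x : H) :
    B ((restrictPairingEquiv B H K hB hH hK hHK).symm χ) x = χ x :=
  DFunLike.congr_fun ((restrictPairingEquiv B H K hB hH hK hHK).apply_symm_apply χ) x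

end AddMonoidHom

theorem statement4_general (L : Type) [AddCommGroup L]
    (nabla : L ≃+ (L →+ QZ)) (hsymp : ∀ x : L, nabla x x = 0)
    (L₁ L₂ : AddSubgroup L)
    (h₁ : ∀ x ∈ L₁, ∀ y ∈ L₁, nabla x y = 0)
    (h₂ : ∀ x ∈ L₂, ∀ y ∈ L₂, nabla x y = 0)
    (hcompl : IsCompl L₁ L₂) :
    ∃ φ : (L₁ × (L₁ →+ QZ)) ≃+ L,
      (∀ a b : L₁ × (L₁ →+ QZ), nabla (φ a) (φ b) = a.2 b.1 - b.2 a.1) ∧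
      AddSubgroup.map φ.toAddMonoidHom
        ((⊤ : AddSubgroup L₁).prod (⊥ : AddSubgroup (L₁ →+ QZ))) = L₁ := by
  let ψ := nabla.toAddMonoidHom.restrictPairingEquiv L₁ L₂ nabla.bijective h₁ h₂ hcompl
  have hψ := nabla.toAddMonoidHom.apply_restrictPairingEquiv_symm_apply nabla.bijective h₁ h₂ hcompl
  let φ := ((AddEquiv.refl L₁).prodCongr ψ.symm).trans (AddSubgroup.prodEquivOfIsCompl hcompl)
  have hφ (a : L₁ × (L₁ →+ QZ)) : φ a = a.1 + ψ.symm a.2 := rfl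
  refine ⟨φ, fun a b => ?_, ?_⟩
  · have hswap := nabla.toAddMonoidHom.apply_swap_eq_neg_of_apply_self_eq_zero hsymp
    simp only [AddEquiv.coe_toAddMonoidHom] at hψ hswap
    rw [hφ, hφ, map_add, map_add, AddMonoidHom.add_apply, AddMonoidHom.add_apply,
      h₁ _ a.1.2 _ b.1.2, h₂ _ (ψ.symm a.2).2 _ (ψ.symm b.2).2, hψ, hswap, hψ]
    abel
  · ext z
    simp only [AddSubgroup.mem_map, AddSubgroup.mem_prod, AddSubgroup.mem_top,
      AddSubgroup.mem_bot, true_and, AddEquiv.coe_toAddMonoidHom, Prod.exists, hφ]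
    constructor
    · rintro ⟨x, _, rfl, rfl⟩
      simp
    · intro hz
      exact ⟨⟨z, hz⟩, 0, rfl, by simp⟩

/-- If a finite abelian group `L` with symplectic self-duality `∇` is the internal
direct product of two isotropic subgroups `L₁` and `L₂`, then `(L, ∇, L₁)` is a
standard triple: there is an isomorphism `φ : L₁ × dual L₁ → L` carrying the
standard symplectic self-duality to `∇` and mapping `L₁ × 0` onto `L₁`. -/
theorem statement4 (L : Type) [AddCommGroup L] [Fintype L]
    (nabla : L ≃+ (L →+ QZ)) (hsymp : ∀ x : L, nabla x x = 0)
    (L₁ L₂ : AddSubgroup L)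
    (h₁ : ∀ x ∈ L₁, ∀ y ∈ L₁, nabla x y = 0)
    (h₂ : ∀ x ∈ L₂, ∀ y ∈ L₂, nabla x y = 0)
    (hcompl : IsCompl L₁ L₂) :
    ∃ φ : (L₁ × (L₁ →+ QZ)) ≃+ L,
      (∀ a b : L₁ × (L₁ →+ QZ), nabla (φ a) (φ b) = a.2 b.1 - b.2 a.1) ∧
      AddSubgroup.map φ.toAddMonoidHom
        ((⊤ : AddSubgroup L₁).prod (⊥ : AddSubgroup (L₁ →+ QZ))) = L₁ :=
  statement4_general L nabla hsymp L₁ L₂ h₁ h₂ hcompl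
end

section
/- Let ∇ be a symplectic self-duality of a finite abelian group L of odd order. Let L₁ be a maximal isotropic subgroup of L that admits a complement L₂ (so L = L₁ × L₂ internally). Then L₁ admits an isotropic complement: there is a subgroup L₂' with L = L₁ × L₂' and L₂' isotropic. -/
/-- The annihilator of a subgroup `H` of `G` inside the character group of `G`. -/
def perp {G : Type*} [AddCommGroup G] (H : AddSubgroup G) : AddSubgroup (G →+ QZ) where
  carrier := {χ : G →+ QZ | ∀ g ∈ H, χ g = 0}
  zero_mem' := by intro g _; simp
  add_mem' := by intro a b ha hb g hg; simp [ha g hg, hb g hg]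
  neg_mem' := by intro a ha g hg; simp [ha g hg]

section

variable {L A : Type*} [AddCommGroup L] [AddCommGroup A]

theorem apply_swap_of_apply_self {F : Type*} [FunLike F L (L →+ A)]
    [AddMonoidHomClass F L (L →+ A)] {f : F} (hf : ∀ x, f x x = 0) (x y : L) :
    f x y = -f y x := by
  have h := hf (x + y)
  simp only [map_add, AddMonoidHom.add_apply, hf, zero_add, add_zero] at h
  exact eq_neg_of_add_eq_zero_right h

theorem AddSubgroup.exists_projection_of_isCompl {L₁ L₂ : AddSubgroup L} (h : IsCompl L₁ L₂) :
    ∃ π : L →+ L, (∀ x ∈ L₁, π x = 0) ∧ ∀ y ∈ L₂, π y = y :=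
  have hc := AddSubgroup.toIntSubmodule.isCompl h.symm
  ⟨(Submodule.projection _ _ hc).toAddMonoidHom,
    fun _ hx ↦ Submodule.projection_apply_of_mem_right hc hx,
    fun _ hy ↦ Submodule.projection_apply_of_mem_left hc hy⟩

theorem AddSubgroup.isCompl_map_add_id {L₁ L₂ : AddSubgroup L} (h : IsCompl L₁ L₂)
    {F : L →+ L} (hF : ∀ z, F z ∈ L₁) : IsCompl L₁ (L₂.map (F + AddMonoidHom.id L)) := by
  constructor
  · rw [AddSubgroup.disjoint_def]
    rintro _ hx ⟨y, hy, rfl⟩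
    have hy₁ : y ∈ L₁ := by simpa using sub_mem hx (hF y)
    simp [AddSubgroup.disjoint_def.mp h.disjoint hy₁ hy]
  · rw [codisjoint_iff, eq_top_iff]
    intro z _
    obtain ⟨a, ha, b, hb, rfl⟩ :=
      AddSubgroup.mem_sup.mp (h.codisjoint.eq_top.symm ▸ AddSubgroup.mem_top z)
    have hz : a + b = (a - F b) + (F b + b) := by abel
    rw [hz]
    exact AddSubgroup.add_mem_sup (sub_mem ha (hF b)) ⟨b, hb, rfl⟩

variable (nabla : L ≃+ (L →+ A)) (π : L →+ L) (m : ℕ)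

def isotropicCorrection : L →+ L :=
  m • nabla.symm.toAddMonoidHom.comp (nabla.toAddMonoidHom.compl₂ π)

theorem apply_isotropicCorrection (z w : L) :
    nabla (isotropicCorrection nabla π m z) w = m • nabla z (π w) := by
  simp [isotropicCorrection]

theorem apply_isotropicCorrection_add_self (hsymp : ∀ x, nabla x x = 0)
    (hπF : ∀ z, π (isotropicCorrection nabla π m z) = 0) {y y' : L} (hy : π y = y)
    (hy' : π y' = y') :
    nabla (isotropicCorrection nabla π m y + y) (isotropicCorrection nabla π m y' + y') =
      (2 * m + 1) • nabla y y' := by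
  have hanti := apply_swap_of_apply_self hsymp
  simp only [map_add, AddMonoidHom.add_apply]
  rw [apply_isotropicCorrection, apply_isotropicCorrection, hπF, map_zero, smul_zero, hy',
    hanti y, apply_isotropicCorrection, hy, hanti y' y, smul_neg, neg_neg]
  module

end

theorem isotropicCorrection_mem {L : Type*} [AddCommGroup L] {L₁ : AddSubgroup L}
    {nabla : L ≃+ (L →+ QZ)} (π : L →+ L) (m : ℕ)
    (hmax : AddSubgroup.comap nabla.toAddMonoidHom (perp L₁) ≤ L₁)
    (hπ : ∀ x ∈ L₁, π x = 0) (z : L) : isotropicCorrection nabla π m z ∈ L₁ :=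
  hmax fun w hw ↦ by
    rw [AddEquiv.coe_toAddMonoidHom, apply_isotropicCorrection, hπ w hw, map_zero, smul_zero]

theorem statement5_general (L : Type) [AddCommGroup L]
    (hodd : Odd (Nat.card L))
    (nabla : L ≃+ (L →+ QZ)) (hsymp : ∀ x : L, nabla x x = 0)
    (L₁ L₂ : AddSubgroup L)
    (hmax : AddSubgroup.comap nabla.toAddMonoidHom (perp L₁) = L₁)
    (hcompl : IsCompl L₁ L₂) :
    ∃ L₂' : AddSubgroup L, IsCompl L₁ L₂' ∧ ∀ x ∈ L₂', ∀ y ∈ L₂', nabla x y = 0 := by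
  obtain ⟨m, hm⟩ := hodd
  obtain ⟨π, hπ₁, hπ₂⟩ := AddSubgroup.exists_projection_of_isCompl hcompl
  set F := isotropicCorrection nabla π m
  have hF : ∀ z, F z ∈ L₁ := isotropicCorrection_mem π m hmax.le hπ₁
  refine ⟨L₂.map (F + AddMonoidHom.id L), AddSubgroup.isCompl_map_add_id hcompl hF, ?_⟩
  rintro _ ⟨y, hy, rfl⟩ _ ⟨y', hy', rfl⟩
  simp only [AddMonoidHom.add_apply, AddMonoidHom.id_apply]
  rw [apply_isotropicCorrection_add_self nabla π m hsymp
      (fun z ↦ hπ₁ _ (hF z)) (hπ₂ y hy) (hπ₂ y' hy'), ← hm, ← map_nsmul, card_nsmul_eq_zero',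
    map_zero]

/-- Let `∇` be a symplectic self-duality of a finite abelian group `L` of odd order.
If a maximal isotropic subgroup `L₁` admits a complement `L₂`, then `L₁` admits an
isotropic complement. -/
theorem statement5 (L : Type) [AddCommGroup L] [Fintype L]
    (hodd : Odd (Nat.card L))
    (nabla : L ≃+ (L →+ QZ)) (hsymp : ∀ x : L, nabla x x = 0)
    (L₁ L₂ : AddSubgroup L)
    (hmax : AddSubgroup.comap nabla.toAddMonoidHom (perp L₁) = L₁)
    (hcompl : IsCompl L₁ L₂) :
    ∃ L₂' : AddSubgroup L, IsCompl L₁ L₂' ∧ ∀ x ∈ L₂', ∀ y ∈ L₂', nabla x y = 0 :=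
  statement5_general L hodd nabla hsymp L₁ L₂ hmax hcompl
end

section
/- Let ∇ be a symplectic self-duality of a finite abelian group L, and let A be an isotropic direct summand of L, say L = A × B. Then L decomposes as an internal direct product A × C × D where: C ≅ dual(A), the subgroup A × C is orthogonal to D under ∇ (∇(x)(y)=0 for x ∈ A×C, y ∈ D), A is isotropic in A × C, and D with the restricted duality is isomorphic to the subquotient L_A = ∇⁻¹(A^⊥)/A with its induced symplectic self-duality. (Peeling lemma, finite case.) -/
/-!
Put `C := ∇⁻¹(B^⊥)` and `D := ∇⁻¹((A + C)^⊥)`. Composing characters with the projection of `L`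
onto `A` along `B` shows that restriction `C → dual A` is bijective, and that every `x : L` differs
from some element of `C` by an element of `∇⁻¹(A^⊥)`. With the alternation of `∇` and the isotropy
of `A` this makes `A + C` nondegenerate, so `L = (A + C) ⊕ D`. An element of `∇⁻¹(A^⊥)` has
vanishing `C`-component, hence `∇⁻¹(A^⊥) = A ⊕ D` and `D ≅ L_A`, compatibly with the pairings.
-/

theorem AddSubgroup.exists_addMonoidHom_extend_of_isCompl {G M : Type*} [AddCommGroup G]
    [AddCommGroup M] {A B : AddSubgroup G} (hAB : IsCompl A B) (ψ : A →+ M) :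
    ∃ χ : G →+ M, (∀ a : A, χ a = ψ a) ∧ ∀ b ∈ B, χ b = 0 := by
  have hAB' := AddSubgroup.toIntSubmodule.isCompl hAB
  refine ⟨ψ.comp (Submodule.projectionOnto _ _ hAB').toAddMonoidHom, fun a => ?_, fun b hb => ?_⟩
  · exact congrArg ψ (Submodule.projectionOnto_apply_left hAB' a)
  · exact (congrArg ψ ((Submodule.projectionOnto_apply_eq_zero_iff hAB').2 hb)).trans ψ.map_zero

theorem AddSubgroup.bijective_mk_comp_inclusion {G : Type*} [AddCommGroup G]
    {A D M : AddSubgroup G} (hDM : D ≤ M) (hAD : A ⊓ D = ⊥) (hM : M ≤ A ⊔ D) :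
    Function.Bijective
      ((QuotientAddGroup.mk' (A.addSubgroupOf M)).comp (AddSubgroup.inclusion hDM)) := by
  refine ⟨(injective_iff_map_eq_zero _).2 fun d hd => ?_, fun q => ?_⟩
  · have hdA : (d : G) ∈ A :=
      AddSubgroup.mem_addSubgroupOf.1 ((QuotientAddGroup.eq_zero_iff (inclusion hDM d)).1 hd)
    exact Subtype.ext ((AddSubgroup.eq_bot_iff_forall _).1 hAD d ⟨hdA, d.2⟩)
  · obtain ⟨m, rfl⟩ := QuotientAddGroup.mk_surjective q
    obtain ⟨a, ha, d, hd, had⟩ := AddSubgroup.mem_sup.1 (hM m.2)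
    refine ⟨⟨d, hd⟩, QuotientAddGroup.eq_iff_sub_mem.2 (AddSubgroup.mem_addSubgroupOf.2 ?_)⟩
    simpa [← had] using neg_mem ha

section Orthogonal

variable {L : Type*} [AddCommGroup L] (nabla : L ≃+ (L →+ QZ))

def orthogonal (S : AddSubgroup L) : AddSubgroup L :=
  AddSubgroup.comap nabla.toAddMonoidHom (perp S)

variable {nabla}

theorem mem_orthogonal {S : AddSubgroup L} {x : L} :
    x ∈ orthogonal nabla S ↔ ∀ s ∈ S, nabla x s = 0 :=
  Iff.rfl

theorem orthogonal_anti {S T : AddSubgroup L} (h : S ≤ T) :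
    orthogonal nabla T ≤ orthogonal nabla S :=
  fun _ hx s hs => hx s (h hs)

theorem orthogonal_sup (S T : AddSubgroup L) :
    orthogonal nabla (S ⊔ T) = orthogonal nabla S ⊓ orthogonal nabla T := by
  ext x
  simp only [AddSubgroup.mem_inf, mem_orthogonal, ← AddMonoidHom.mem_ker, ← SetLike.le_def]
  exact sup_le_iff

theorem orthogonal_top : orthogonal nabla (⊤ : AddSubgroup L) = ⊥ := by
  refine (AddSubgroup.eq_bot_iff_forall _).2 fun x hx => nabla.injective ?_
  ext y
  simpa using hx y trivial

theorem apply_eq_neg_apply (hsymp : ∀ x : L, nabla x x = 0) (x y : L) :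
    nabla x y = -nabla y x := by
  have h := hsymp (x + y)
  simp only [map_add, AddMonoidHom.add_apply, hsymp, zero_add, add_zero] at h
  exact eq_neg_of_add_eq_zero_right h

theorem le_orthogonal_orthogonal (hsymp : ∀ x : L, nabla x x = 0) (S : AddSubgroup L) :
    S ≤ orthogonal nabla (orthogonal nabla S) := fun s hs => mem_orthogonal.2 fun x hx => by
  rw [apply_eq_neg_apply hsymp, mem_orthogonal.1 hx s hs, neg_zero]

section Complement

variable {A B : AddSubgroup L}

theorem exists_mem_orthogonal_apply_eq (hAB : IsCompl A B) (ψ : A →+ QZ) :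
    ∃ c ∈ orthogonal nabla B, ∀ a : A, nabla c a = ψ a := by
  obtain ⟨χ, hχA, hχB⟩ := AddSubgroup.exists_addMonoidHom_extend_of_isCompl hAB ψ
  exact ⟨nabla.symm χ, fun b hb => by simpa using hχB b hb, fun a => by simpa using hχA a⟩

theorem exists_mem_orthogonal_sub_mem_orthogonal (hAB : IsCompl A B) (x : L) :
    ∃ c ∈ orthogonal nabla B, x - c ∈ orthogonal nabla A := by
  obtain ⟨c, hc, hcA⟩ := exists_mem_orthogonal_apply_eq hAB ((nabla x).comp A.subtype)
  refine ⟨c, hc, mem_orthogonal.2 fun a ha => ?_⟩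
  rw [map_sub, AddMonoidHom.sub_apply, hcA ⟨a, ha⟩, AddMonoidHom.comp_apply,
    AddSubgroup.coe_subtype, sub_self]

theorem orthogonal_inf_orthogonal_eq_bot (hAB : IsCompl A B) :
    orthogonal nabla A ⊓ orthogonal nabla B = ⊥ := by
  rw [← orthogonal_sup, hAB.sup_eq_top, orthogonal_top]

theorem eq_zero_of_mem_orthogonal_of_mem_orthogonal (hAB : IsCompl A B) {c : L}
    (hcA : c ∈ orthogonal nabla A) (hcB : c ∈ orthogonal nabla B) : c = 0 :=
  (AddSubgroup.eq_bot_iff_forall _).1 (orthogonal_inf_orthogonal_eq_bot hAB) c ⟨hcA, hcB⟩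

theorem nonempty_orthogonal_addEquiv_dual (hAB : IsCompl A B) :
    Nonempty (orthogonal nabla B ≃+ (A →+ QZ)) := by
  let r : orthogonal nabla B →+ (A →+ QZ) :=
    (AddMonoidHom.compHom' A.subtype).comp (nabla.toAddMonoidHom.comp (orthogonal nabla B).subtype)
  refine ⟨AddEquiv.ofBijective r ⟨(injective_iff_map_eq_zero r).2 fun c hc => ?_, fun ψ => ?_⟩⟩
  · have hcA : (c : L) ∈ orthogonal nabla A := fun a ha => DFunLike.congr_fun hc ⟨a, ha⟩
    exact Subtype.ext (eq_zero_of_mem_orthogonal_of_mem_orthogonal hAB hcA c.2)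
  · obtain ⟨c, hc, hcA⟩ := exists_mem_orthogonal_apply_eq hAB ψ
    exact ⟨⟨c, hc⟩, AddMonoidHom.ext hcA⟩

theorem inf_orthogonal_orthogonal_eq_bot (hsymp : ∀ x : L, nabla x x = 0) (hAB : IsCompl A B) :
    A ⊓ orthogonal nabla (orthogonal nabla B) = ⊥ := by
  refine (AddSubgroup.eq_bot_iff_forall _).2 fun a ha => nabla.injective ?_
  ext y
  obtain ⟨c, hc, hyc⟩ := exists_mem_orthogonal_sub_mem_orthogonal hAB y
  have hac : nabla a c = 0 := mem_orthogonal.1 ha.2 c hc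
  have hayc : nabla a (y - c) = 0 := by
    rw [apply_eq_neg_apply hsymp, mem_orthogonal.1 hyc a ha.1, neg_zero]
  calc nabla a y = nabla a c + nabla a (y - c) := by rw [← map_add, add_sub_cancel]
    _ = nabla 0 y := by rw [hac, hayc, add_zero, map_zero, AddMonoidHom.zero_apply]

theorem inf_orthogonal_eq_bot (hA : A ≤ orthogonal nabla A) (hAB : IsCompl A B) :
    A ⊓ orthogonal nabla B = ⊥ :=
  le_bot_iff.1 <| (inf_le_inf_right _ hA).trans (orthogonal_inf_orthogonal_eq_bot hAB).le

theorem sup_inf_orthogonal_sup_eq_bot (hsymp : ∀ x : L, nabla x x = 0)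
    (hA : A ≤ orthogonal nabla A) (hAB : IsCompl A B) :
    (A ⊔ orthogonal nabla B) ⊓ orthogonal nabla (A ⊔ orthogonal nabla B) = ⊥ := by
  refine (AddSubgroup.eq_bot_iff_forall _).2 fun x hx => ?_
  rw [AddSubgroup.mem_inf, orthogonal_sup, AddSubgroup.mem_inf] at hx
  obtain ⟨hx, hxD⟩ := hx
  obtain ⟨a, ha, c, hc, rfl⟩ := AddSubgroup.mem_sup.1 hx
  have hcA : c ∈ orthogonal nabla A := by simpa using sub_mem hxD.1 (hA ha)
  obtain rfl := eq_zero_of_mem_orthogonal_of_mem_orthogonal hAB hcA hc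
  rw [add_zero] at hxD ⊢
  exact (AddSubgroup.eq_bot_iff_forall _).1 (inf_orthogonal_orthogonal_eq_bot hsymp hAB) a
    ⟨ha, hxD.2⟩

theorem sup_sup_orthogonal_sup_eq_top (hsymp : ∀ x : L, nabla x x = 0)
    (hA : A ≤ orthogonal nabla A) (hAB : IsCompl A B) :
    A ⊔ orthogonal nabla B ⊔ orthogonal nabla (A ⊔ orthogonal nabla B) = ⊤ := by
  refine eq_top_iff.2 fun y _ => ?_
  obtain ⟨c, hc, hyc⟩ := exists_mem_orthogonal_sub_mem_orthogonal hAB y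
  obtain ⟨a, ha, b, hb, hab⟩ :=
    AddSubgroup.mem_sup.1 (hAB.sup_eq_top ▸ AddSubgroup.mem_top (y - c))
  have hd : y - c - a ∈ orthogonal nabla (A ⊔ orthogonal nabla B) := by
    rw [orthogonal_sup]
    refine AddSubgroup.mem_inf.2 ⟨sub_mem hyc (hA ha), ?_⟩
    rw [← hab, add_sub_cancel_left]
    exact le_orthogonal_orthogonal hsymp B hb
  exact AddSubgroup.mem_sup.2 ⟨a + c, add_mem (AddSubgroup.mem_sup_left ha)
    (AddSubgroup.mem_sup_right hc), _, hd, by abel⟩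

theorem orthogonal_le_sup_orthogonal_sup (hsymp : ∀ x : L, nabla x x = 0)
    (hA : A ≤ orthogonal nabla A) (hAB : IsCompl A B) :
    orthogonal nabla A ≤ A ⊔ orthogonal nabla (A ⊔ orthogonal nabla B) := by
  intro m hm
  obtain ⟨n, hn, d, hd, rfl⟩ := AddSubgroup.mem_sup.1
    ((sup_sup_orthogonal_sup_eq_top hsymp hA hAB).ge (AddSubgroup.mem_top m))
  obtain ⟨a, ha, c, hc, rfl⟩ := AddSubgroup.mem_sup.1 hn
  have hcA : c ∈ orthogonal nabla A := by
    have := sub_mem (sub_mem hm (hA ha)) (orthogonal_anti le_sup_left hd)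
    rwa [show a + c + d - a - d = c by abel] at this
  obtain rfl := eq_zero_of_mem_orthogonal_of_mem_orthogonal hAB hcA hc
  rw [add_zero]
  exact add_mem (AddSubgroup.mem_sup_left ha) (AddSubgroup.mem_sup_right hd)

end Complement

theorem apply_eq_of_sub_mem (hsymp : ∀ x : L, nabla x x = 0) {A : AddSubgroup L}
    (hA : A ≤ orthogonal nabla A) {x y x' y' : L} (hx : x ∈ orthogonal nabla A)
    (hy : y ∈ orthogonal nabla A) (hx' : x' - x ∈ A) (hy' : y' - y ∈ A) :
    nabla x' y' = nabla x y := by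
  obtain ⟨a, ha, rfl⟩ : ∃ a ∈ A, x' = x + a := ⟨x' - x, hx', by abel⟩
  obtain ⟨b, hb, rfl⟩ : ∃ b ∈ A, y' = y + b := ⟨y' - y, hy', by abel⟩
  have hxb : nabla x b = 0 := mem_orthogonal.1 hx b hb
  have hay : nabla a y = 0 := by
    rw [apply_eq_neg_apply hsymp, mem_orthogonal.1 hy a ha, neg_zero]
  have hab : nabla a b = 0 := mem_orthogonal.1 (hA ha) b hb
  simp only [map_add, AddMonoidHom.add_apply, hxb, hay, hab, add_zero]

end Orthogonal

theorem statement8_general (L : Type) [AddCommGroup L]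
    (nabla : L ≃+ (L →+ QZ)) (hsymp : ∀ x : L, nabla x x = 0)
    (A B : AddSubgroup L) (hcompl : IsCompl A B)
    (hiso : ∀ x ∈ A, ∀ y ∈ A, nabla x y = 0) :
    ∃ C D : AddSubgroup L,
      A ⊓ C = ⊥ ∧ (A ⊔ C) ⊓ D = ⊥ ∧ A ⊔ C ⊔ D = ⊤ ∧
      Nonempty (C ≃+ (A →+ QZ)) ∧
      (∀ x ∈ A ⊔ C, ∀ y ∈ D, nabla x y = 0) ∧
      ∃ ψ : D ≃+ (AddSubgroup.comap nabla.toAddMonoidHom (perp A) ⧸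
        A.addSubgroupOf (AddSubgroup.comap nabla.toAddMonoidHom (perp A))),
        ∀ (x y : D) (x' y' : AddSubgroup.comap nabla.toAddMonoidHom (perp A)),
          (QuotientAddGroup.mk x' : AddSubgroup.comap nabla.toAddMonoidHom (perp A) ⧸
            A.addSubgroupOf (AddSubgroup.comap nabla.toAddMonoidHom (perp A))) = ψ x →
          (QuotientAddGroup.mk y' : AddSubgroup.comap nabla.toAddMonoidHom (perp A) ⧸
            A.addSubgroupOf (AddSubgroup.comap nabla.toAddMonoidHom (perp A))) = ψ y →
          nabla (x' : L) (y' : L) = nabla (x : L) (y : L) := by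
  have hA : A ≤ orthogonal nabla A := fun x hx => mem_orthogonal.2 (hiso x hx)
  set C := orthogonal nabla B
  set D := orthogonal nabla (A ⊔ C)
  have hND := sup_inf_orthogonal_sup_eq_bot hsymp hA hcompl
  have hDM : D ≤ orthogonal nabla A := orthogonal_anti le_sup_left
  have hAD : A ⊓ D = ⊥ := le_bot_iff.1 (hND ▸ inf_le_inf_right D le_sup_left)
  refine ⟨C, D, inf_orthogonal_eq_bot hA hcompl, hND, sup_sup_orthogonal_sup_eq_top hsymp hA hcompl,
    nonempty_orthogonal_addEquiv_dual hcompl, fun x hx => le_orthogonal_orthogonal hsymp _ hx,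
    AddEquiv.ofBijective _ (AddSubgroup.bijective_mk_comp_inclusion hDM hAD
      (orthogonal_le_sup_orthogonal_sup hsymp hA hcompl)), fun x y x' y' hx hy => ?_⟩
  exact apply_eq_of_sub_mem hsymp hA (hDM x.2) (hDM y.2)
    (AddSubgroup.mem_addSubgroupOf.1 (QuotientAddGroup.eq_iff_sub_mem.1 hx))
    (AddSubgroup.mem_addSubgroupOf.1 (QuotientAddGroup.eq_iff_sub_mem.1 hy))

/-- Peeling lemma (finite case).  If `A` is an isotropic direct summand of a finite
abelian group `L` with symplectic self-duality `∇`, then `L = A × C × D` internally,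
where `C ≅ dual A`, `A × C` is orthogonal to `D`, and `D` with the restricted duality
is isomorphic to the subquotient `L_A = ∇⁻¹(A^⊥)/A` with its induced symplectic
self-duality. -/
theorem statement8 (L : Type) [AddCommGroup L] [Fintype L]
    (nabla : L ≃+ (L →+ QZ)) (hsymp : ∀ x : L, nabla x x = 0)
    (A B : AddSubgroup L) (hcompl : IsCompl A B)
    (hiso : ∀ x ∈ A, ∀ y ∈ A, nabla x y = 0) :
    ∃ C D : AddSubgroup L,
      A ⊓ C = ⊥ ∧ (A ⊔ C) ⊓ D = ⊥ ∧ A ⊔ C ⊔ D = ⊤ ∧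
      Nonempty (C ≃+ (A →+ QZ)) ∧
      (∀ x ∈ A ⊔ C, ∀ y ∈ D, nabla x y = 0) ∧
      ∃ ψ : D ≃+ (AddSubgroup.comap nabla.toAddMonoidHom (perp A) ⧸
        A.addSubgroupOf (AddSubgroup.comap nabla.toAddMonoidHom (perp A))),
        ∀ (x y : D) (x' y' : AddSubgroup.comap nabla.toAddMonoidHom (perp A)),
          (QuotientAddGroup.mk x' : AddSubgroup.comap nabla.toAddMonoidHom (perp A) ⧸
            A.addSubgroupOf (AddSubgroup.comap nabla.toAddMonoidHom (perp A))) = ψ x →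
          (QuotientAddGroup.mk y' : AddSubgroup.comap nabla.toAddMonoidHom (perp A) ⧸
            A.addSubgroupOf (AddSubgroup.comap nabla.toAddMonoidHom (perp A))) = ψ y →
          nabla (x' : L) (y' : L) = nabla (x : L) (y : L) :=
  statement8_general L nabla hsymp A B hcompl hiso
end

section
/- Let ∇ be a symplectic self-duality of a finite abelian group L, and let A ≤ L be an isotropic subgroup. Then ∇ descends to a well-defined map ∇_A : ∇⁻¹(A^⊥)/A → dual(∇⁻¹(A^⊥)/A), given by ∇_A(x + A)(y + A) = ∇(x)(y), and ∇_A is a symplectic self-duality of L_A = ∇⁻¹(A^⊥)/A. -/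
lemma ext_char {G : Type*} [AddCommGroup G] (K : AddSubgroup G) (c : K →+ QZ) :
    ∃ χ : G →+ QZ, ∀ k : K, χ k = c k := by
  obtain ⟨χ, hχ⟩ := CharacterModule.dual_surjective_of_injective
    (AddSubgroup.subtype K).toIntLinearMap K.subtype_injective c
  exact ⟨χ, fun k => (DFunLike.congr_fun hχ k).symm ▸ rfl⟩

lemma sep_char {G : Type*} [AddCommGroup G] {g : G} (hg : g ≠ 0) :
    ∃ χ : G →+ QZ, χ g ≠ 0 :=
  CharacterModule.exists_character_apply_ne_zero_of_ne_zero hg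

/-- If `A` is an isotropic subgroup of a finite abelian group `L` with symplectic
self-duality `∇`, then `∇` descends to a well-defined symplectic self-duality `∇_A`
of the subquotient `L_A = ∇⁻¹(A^⊥)/A`, given by `∇_A(x+A)(y+A) = ∇(x)(y)`. -/
theorem statement9 (L : Type) [AddCommGroup L] [Fintype L]
    (nabla : L ≃+ (L →+ QZ)) (hsymp : ∀ x : L, nabla x x = 0)
    (A : AddSubgroup L)
    (hiso : ∀ x ∈ A, ∀ y ∈ A, nabla x y = 0) :
    ∃ nablaA : (AddSubgroup.comap nabla.toAddMonoidHom (perp A) ⧸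
        A.addSubgroupOf (AddSubgroup.comap nabla.toAddMonoidHom (perp A))) ≃+
      ((AddSubgroup.comap nabla.toAddMonoidHom (perp A) ⧸
        A.addSubgroupOf (AddSubgroup.comap nabla.toAddMonoidHom (perp A))) →+ QZ),
      (∀ x y : AddSubgroup.comap nabla.toAddMonoidHom (perp A),
        nablaA (QuotientAddGroup.mk x) (QuotientAddGroup.mk y) = nabla (x : L) (y : L)) ∧
      (∀ z, nablaA z z = 0) := by
  
  classical
  set K := AddSubgroup.comap nabla.toAddMonoidHom (perp A) with hK
  set A' := A.addSubgroupOf K with hA'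
  -- antisymmetry
  have antisym : ∀ x y : L, nabla x y = - nabla y x := by
    intro x y
    have h := hsymp (x + y)
    simp only [map_add, AddMonoidHom.add_apply, hsymp x, hsymp y, zero_add, add_zero] at h
    exact eq_neg_of_add_eq_zero_right h
  have memK : ∀ x : L, x ∈ K ↔ ∀ a ∈ A, nabla x a = 0 := fun x => Iff.rfl
  have hAK : ∀ a ∈ A, a ∈ K := fun a ha => (memK a).2 (fun b hb => hiso a ha b hb)
  -- first descent: in the second variable
  have vanish1 : ∀ (x : K), ∀ y ∈ A', ((nabla x.1).comp K.subtype) y = 0 := by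
    intro x y hy
    exact x.2 y.1 ((AddSubgroup.mem_addSubgroupOf).mp hy)
  let f1 : K → ((K ⧸ A') →+ QZ) := fun x =>
    QuotientAddGroup.lift A' ((nabla x.1).comp K.subtype) (vanish1 x)
  have f1_mk : ∀ (x y : K), f1 x (QuotientAddGroup.mk y) = nabla x.1 y.1 := fun _ _ => rfl
  let f2 : K →+ ((K ⧸ A') →+ QZ) :=
    { toFun := f1
      map_zero' := by
        ext q
        simp only [AddMonoidHom.comp_apply, QuotientAddGroup.mk'_apply,
          AddMonoidHom.zero_apply, f1_mk]
        simp
      map_add' := by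
        intro x x'
        ext q
        simp only [AddMonoidHom.comp_apply, QuotientAddGroup.mk'_apply,
          AddMonoidHom.add_apply, f1_mk]
        simp }
  -- second descent: in the first variable
  have vanish2 : ∀ x ∈ A', f2 x = 0 := by
    intro x hx
    ext q
    simp only [AddMonoidHom.comp_apply, QuotientAddGroup.mk'_apply, AddMonoidHom.zero_apply]
    show f1 x (QuotientAddGroup.mk q) = 0
    rw [f1_mk, antisym]
    have hq0 : (nabla q.1) x.1 = 0 := q.2 x.1 ((AddSubgroup.mem_addSubgroupOf).mp hx)
    rw [hq0, neg_zero]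
  let psi : (K ⧸ A') →+ ((K ⧸ A') →+ QZ) := QuotientAddGroup.lift A' f2 vanish2
  have psi_mk : ∀ (x y : K),
      psi (QuotientAddGroup.mk x) (QuotientAddGroup.mk y) = nabla x.1 y.1 := fun _ _ => rfl
  -- injectivity
  have inj : Function.Injective psi := by
    rw [injective_iff_map_eq_zero]
    intro q hq
    induction q using QuotientAddGroup.induction_on with
    | H x =>
      rw [QuotientAddGroup.eq_zero_iff]
      rw [AddSubgroup.mem_addSubgroupOf]
      by_contra hxA
      have hx0 : (QuotientAddGroup.mk x.1 : L ⧸ A) ≠ 0 := by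
        rwa [ne_eq, QuotientAddGroup.eq_zero_iff]
      obtain ⟨η, hη⟩ := sep_char hx0
      set χ : L →+ QZ := η.comp (QuotientAddGroup.mk' A) with hχ
      have hχperp : χ ∈ perp A := by
        intro g hg
        show η (QuotientAddGroup.mk g) = 0
        rw [(QuotientAddGroup.eq_zero_iff g).mpr hg, map_zero]
      set y : L := nabla.symm χ with hy
      have hyK : y ∈ K := by
        show nabla y ∈ perp A
        rw [hy, nabla.apply_symm_apply]; exact hχperp
      have h1 : nabla x.1 y = 0 := by
        have := congrFun (congrArg DFunLike.coe hq) (QuotientAddGroup.mk ⟨y, hyK⟩)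
        simpa [psi_mk] using this
      have h2 : χ x.1 = 0 := by
        have : nabla y x.1 = 0 := by rw [antisym, h1, neg_zero]
        rwa [hy, nabla.apply_symm_apply] at this
      exact hη h2
  -- surjectivity
  have surj : Function.Surjective psi := by
    intro c
    obtain ⟨χ, hχ⟩ := ext_char K (c.comp (QuotientAddGroup.mk' A'))
    have hχperp : χ ∈ perp A := by
      intro g hg
      have h0 : (⟨g, hAK g hg⟩ : K) ∈ A' := (AddSubgroup.mem_addSubgroupOf).mpr hg
      calc χ g = c (QuotientAddGroup.mk ⟨g, hAK g hg⟩) := hχ ⟨g, hAK g hg⟩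
        _ = c 0 := by rw [(QuotientAddGroup.eq_zero_iff _).mpr h0]
        _ = 0 := map_zero c
    have hxK : nabla.symm χ ∈ K := by
      show nabla (nabla.symm χ) ∈ perp A
      rw [nabla.apply_symm_apply]; exact hχperp
    refine ⟨QuotientAddGroup.mk ⟨nabla.symm χ, hxK⟩, ?_⟩
    ext q
    simp only [AddMonoidHom.comp_apply, QuotientAddGroup.mk'_apply]
    rw [psi_mk]
    show nabla (nabla.symm χ) q.1 = c (QuotientAddGroup.mk q)
    rw [nabla.apply_symm_apply]
    exact hχ q
  refine ⟨AddEquiv.ofBijective psi ⟨inj, surj⟩, fun x y => psi_mk x y, ?_⟩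
  intro z
  induction z using QuotientAddGroup.induction_on with
  | H x => rw [show (AddEquiv.ofBijective psi ⟨inj, surj⟩) (QuotientAddGroup.mk x) = psi (QuotientAddGroup.mk x) from rfl, psi_mk]; exact hsymp x.1
end

section
/- Let L be a finite abelian group with a symplectic self-duality ∇. Then |L| is a perfect square, and L possesses a maximal isotropic subgroup G with |G|² = |L|. -/
/-!
Characters of a finite abelian group into `ℚ/ℤ` are as numerous as its elements, and since `ℚ/ℤ`
is divisible every character of a subgroup `G` extends, so `|G^⊥| · |G| = |L|`. For the
alternating form `(x, y) ↦ ∇ x y`, any `x` orthogonal to an isotropic `G` can be adjoined to `G`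
keeping it isotropic; so a maximal isotropic `G` satisfies `∇⁻¹(G^⊥) = G`, whence `∇` maps `G`
onto `G^⊥` and `|G|² = |G^⊥| · |G| = |L|`.
-/

open AddSubgroup

namespace QZ

lemma addOrderOf_coe_one_div {n : ℕ} (hn : n ≠ 0) : addOrderOf (((1 / n : ℚ)) : QZ) = n :=
  AddCircle.addOrderOf_period_div (Nat.pos_of_ne_zero hn)

lemma mem_zmultiples_of_nsmul_eq_zero {n : ℕ} (hn : n ≠ 0) {u : QZ} (hu : n • u = 0) :
    u ∈ zmultiples (((1 / n : ℚ)) : QZ) := by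
  induction u using QuotientAddGroup.induction_on with
  | H r =>
    rw [← AddCircle.coe_nsmul, AddCircle.coe_eq_zero_iff] at hu
    obtain ⟨k, hk⟩ := hu
    refine ⟨k, ?_⟩
    change ((k • (1 / n : ℚ) : ℚ) : QZ) = r
    rw [zsmul_eq_mul, mul_one, nsmul_eq_mul] at hk
    rw [zsmul_eq_mul, hk]
    field_simp

instance hasEnoughRootsOfUnity (n : ℕ) [NeZero n] :
    HasEnoughRootsOfUnity (Multiplicative QZ) n := by
  set ζ := Multiplicative.ofAdd (((1 / n : ℚ)) : QZ)
  have hζ : IsPrimitiveRoot ζ n := by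
    simpa only [ζ, orderOf_ofAdd_eq_addOrderOf, addOrderOf_coe_one_div (NeZero.ne n)]
      using IsPrimitiveRoot.orderOf ζ
  refine ⟨⟨ζ, hζ⟩, ⟨hζ.toRootsOfUnity, fun x => ?_⟩⟩
  have hx : n • Multiplicative.toAdd ((x : (Multiplicative QZ)ˣ) : Multiplicative QZ) = 0 := by
    simpa using congrArg Multiplicative.toAdd ((mem_rootsOfUnity' n _).mp x.2)
  obtain ⟨k, hk⟩ := mem_zmultiples_of_nsmul_eq_zero (NeZero.ne n) hx
  refine ⟨k, Subtype.ext (Units.ext ?_)⟩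
  simpa [ζ] using congrArg Multiplicative.ofAdd hk

end QZ

section Characters

variable {A : Type*} [AddCommGroup A]

lemma card_addMonoidHom_QZ [Finite A] : Nat.card (A →+ QZ) = Nat.card A := by
  have : NeZero (Monoid.exponent (Multiplicative A)) :=
    ⟨Monoid.exponent_ne_zero_of_finite⟩
  calc Nat.card (A →+ QZ) = Nat.card (Multiplicative A →* (Multiplicative QZ)ˣ) :=
        Nat.card_congr <| AddMonoidHom.toMultiplicative.trans
          (MulEquiv.monoidHomCongrRight toUnits).toEquiv
    _ = Nat.card A := CommGroup.card_monoidHom_of_hasEnoughRootsOfUnity _ _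

lemma ker_compHom'_subtype (H : AddSubgroup A) :
    (AddMonoidHom.compHom' H.subtype : (A →+ QZ) →+ (H →+ QZ)).ker = perp H := by
  ext χ
  simp only [AddMonoidHom.mem_ker, AddMonoidHom.ext_iff, Subtype.forall]
  rfl

lemma compHom'_subtype_surjective (H : AddSubgroup A) :
    Function.Surjective (AddMonoidHom.compHom' H.subtype : (A →+ QZ) →+ (H →+ QZ)) :=
  fun χ => (Module.Baer.of_divisible QZ).extension_property_addMonoidHom H.subtype
    Subtype.coe_injective χ

lemma card_perp_mul_card [Finite A] (H : AddSubgroup A) :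
    Nat.card (perp H) * Nat.card H = Nat.card A := by
  calc Nat.card (perp H) * Nat.card H = Nat.card (H →+ QZ) * Nat.card (perp H) := by
        rw [card_addMonoidHom_QZ, mul_comm]
    _ = Nat.card (A →+ QZ) := by
        rw [card_eq_card_quotient_mul_card_addSubgroup (perp H), ← ker_compHom'_subtype,
          Nat.card_congr (QuotientAddGroup.quotientKerEquivOfSurjective _
            (compHom'_subtype_surjective H)).toEquiv]
    _ = Nat.card A := card_addMonoidHom_QZ

end Characters

section Isotropic

variable {L : Type*} [AddCommGroup L] (b : L →+ L →+ QZ)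

def IsIsotropic (G : AddSubgroup L) : Prop := ∀ x ∈ G, ∀ y ∈ G, b x y = 0

variable {b}

lemma apply_apply_eq_neg_of_alternating (hb : ∀ x, b x x = 0) (x y : L) : b x y = -b y x := by
  have h := hb (x + y)
  simp only [map_add, AddMonoidHom.add_apply, hb x, hb y, zero_add, add_zero] at h
  exact eq_neg_of_add_eq_zero_right h

lemma IsIsotropic.sup_zmultiples (hb : ∀ x, b x x = 0) {G : AddSubgroup L}
    (hG : IsIsotropic b G) {x : L} (hx : x ∈ (perp G).comap b) :
    IsIsotropic b (G ⊔ zmultiples x) := by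
  have hxG : ∀ g ∈ G, b x g = 0 := hx
  have hGx : ∀ g ∈ G, b g x = 0 := fun g hg => by
    rw [apply_apply_eq_neg_of_alternating hb, hxG g hg, neg_zero]
  rintro _ hy _ hz
  obtain ⟨g, hg, _, ⟨m, rfl⟩, rfl⟩ := mem_sup.mp hy
  obtain ⟨h, hh, _, ⟨l, rfl⟩, rfl⟩ := mem_sup.mp hz
  simp [hG g hg h hh, hxG h hh, hGx g hg, hb x]

lemma comap_perp_eq_of_maximal_isIsotropic (hb : ∀ x, b x x = 0) {G : AddSubgroup L}
    (hG : Maximal (IsIsotropic b) G) : (perp G).comap b = G := by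
  refine le_antisymm (fun x hx => ?_) fun x hx y hy => hG.prop x hx y hy
  have hle := hG.2 (hG.prop.sup_zmultiples hb hx) le_sup_left
  exact hle (mem_sup_right (mem_zmultiples x))

lemma exists_comap_perp_eq [Finite L] (hb : ∀ x, b x x = 0) :
    ∃ G : AddSubgroup L, (perp G).comap b = G := by
  obtain ⟨G, hG⟩ := (Set.toFinite {G : AddSubgroup L | IsIsotropic b G}).exists_maximal
    ⟨⊥, fun x hx y _ => by simp [mem_bot.mp hx]⟩
  exact ⟨G, comap_perp_eq_of_maximal_isIsotropic hb hG⟩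

end Isotropic

/-- A finite abelian group `L` with a symplectic self-duality has square order, and
possesses a maximal isotropic subgroup `G` with `|G|² = |L|`. -/
theorem statement11 (L : Type) [AddCommGroup L] [Fintype L]
    (nabla : L ≃+ (L →+ QZ)) (hsymp : ∀ x : L, nabla x x = 0) :
    IsSquare (Nat.card L) ∧
    ∃ G : AddSubgroup L,
      AddSubgroup.comap nabla.toAddMonoidHom (perp G) = G ∧
      Nat.card G ^ 2 = Nat.card L := by
  obtain ⟨G, hG⟩ := exists_comap_perp_eq (b := nabla.toAddMonoidHom) hsymp
  have hperp : G.map nabla.toAddMonoidHom = perp G := by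
    nth_rw 1 [← hG]
    exact map_comap_eq_self_of_surjective nabla.surjective _
  have hcard : Nat.card (perp G) = Nat.card G := by
    rw [← hperp, card_map_of_injective nabla.injective]
  have hsq : Nat.card G ^ 2 = Nat.card L := by
    rw [sq, ← card_perp_mul_card G, hcard]
  exact ⟨⟨Nat.card G, by rw [← hsq, sq]⟩, G, hG, hsq⟩
end

section
/- Let p be a prime, λ = (λ₁ ≥ ... ≥ λ_l) positive integers, and let α be an l × l integer matrix. Let L be the quotient of ℤ^{2l} by the column space of the block matrix ⎛p^λ −α; 0 p^λ⎞ (where p^λ = diag(p^{λ₁},...,p^{λ_l})). Then the minimal number of generators of the p-group L equals 2l − rank_{𝔽_p}(ᾱ), where ᾱ is the reduction of α modulo p. -/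
open Matrix

/-- The minimal number of generators of an abelian group. -/
noncomputable def minGenerators (M : Type*) [AddCommGroup M] : ℕ :=
  sInf {n : ℕ | ∃ S : Finset M, S.card = n ∧ AddSubgroup.closure (S : Set M) = ⊤}

/-!
Write `A` for the block matrix and `L = ℤ^{2l} / im A`. Reduction mod `p` induces a surjection
`L → 𝔽_p^{2l} / im Ā` whose kernel is `p L`, and `L` is killed by `det A = p^{2 Σ λᵢ}`. Hence, by
Nakayama's lemma for the nilpotent ideal `(p)`, a finite set generates `L` exactly when its image
spans the `𝔽_p`-space `𝔽_p^{2l} / im Ā`, so `L` needs `2l - rank Ā` generators. Modulo `p` the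
diagonal blocks `p^λ` vanish, leaving `Ā = (0, -ᾱ; 0, 0)`, whose rank is that of `ᾱ`.
-/

theorem AddSubgroup.eq_top_of_forall_sub_nsmul_mem {M : Type*} [AddCommGroup M]
    {H : AddSubgroup M} {p K : ℕ} (hK : ∀ x : M, p ^ K • x = 0)
    (h : ∀ x : M, ∃ y, x - p • y ∈ H) : H = ⊤ := by
  have key : ∀ k, ∀ x : M, ∃ y, x - p ^ k • y ∈ H := by
    intro k
    induction k with
    | zero => exact fun x => ⟨x, by simp⟩
    | succ k ih =>
      intro x
      obtain ⟨y, hy⟩ := ih x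
      obtain ⟨z, hz⟩ := h y
      refine ⟨z, ?_⟩
      convert H.add_mem hy (H.nsmul_mem hz (p ^ k)) using 1
      rw [nsmul_sub, smul_smul, ← pow_succ]
      abel
  refine eq_top_iff.mpr fun x _ => ?_
  obtain ⟨y, hy⟩ := key K x
  simpa [hK] using hy

theorem AddSubgroup.closure_eq_span_zmod {n : ℕ} {V : Type*} [AddCommGroup V]
    [Module (ZMod n) V] (s : Set V) :
    AddSubgroup.closure s = (Submodule.span (ZMod n) s).toAddSubgroup := by
  refine le_antisymm (AddSubgroup.closure_le _ |>.mpr Submodule.subset_span) ?_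
  rw [← AddSubgroup.toZModSubmodule_toAddSubgroup n (AddSubgroup.closure s)]
  exact Submodule.toAddSubgroup_mono (Submodule.span_le.mpr AddSubgroup.subset_closure)

section Generators

variable {p : ℕ} [Fact p.Prime] {M V : Type*} [AddCommGroup M] [AddCommGroup V]
  [Module (ZMod p) V]

theorem finrank_le_card_of_closure_eq_top {ψ : M →+ V} (hψ : Function.Surjective ψ)
    {S : Finset M} (hS : AddSubgroup.closure (S : Set M) = ⊤) :
    Module.finrank (ZMod p) V ≤ S.card := by
  classical
  have hspan : Submodule.span (ZMod p) (S.image ψ : Set V) = ⊤ := by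
    rw [← Submodule.toAddSubgroup_eq_top, ← AddSubgroup.closure_eq_span_zmod,
      Finset.coe_image, ← AddMonoidHom.map_closure, hS, ← AddMonoidHom.range_eq_map,
      AddMonoidHom.range_eq_top.mpr hψ]
  calc Module.finrank (ZMod p) V
        = Module.finrank (ZMod p) (Submodule.span (ZMod p) (S.image ψ : Set V)) := by
          rw [hspan, finrank_top]
    _ ≤ (S.image ψ).card := finrank_span_finset_le_card _
    _ ≤ S.card := Finset.card_image_le

theorem exists_card_eq_finrank_closure_eq_top [Module.Finite (ZMod p) V] {K : ℕ}
    (hK : ∀ x : M, p ^ K • x = 0)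
    {ψ : M →+ V} (hψ : Function.Surjective ψ) (hker : ∀ x, ψ x = 0 → ∃ y, x = p • y) :
    ∃ S : Finset M, S.card = Module.finrank (ZMod p) V ∧ AddSubgroup.closure (S : Set M) = ⊤ := by
  classical
  let b := Module.finBasis (ZMod p) V
  choose g hg using fun i => hψ (b i)
  have hg_inj : Function.Injective g := fun i j h => b.injective (by rw [← hg i, ← hg j, h])
  refine ⟨Finset.univ.image g, by simp [Finset.card_image_of_injective _ hg_inj], ?_⟩
  have hmap : (AddSubgroup.closure (Set.range g)).map ψ = ⊤ := by
    rw [AddMonoidHom.map_closure, ← Set.range_comp, show ψ ∘ g = b from funext hg,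
      AddSubgroup.closure_eq_span_zmod (n := p), b.span_eq, Submodule.top_toAddSubgroup]
  simp only [Finset.coe_image, Finset.coe_univ, Set.image_univ]
  refine AddSubgroup.eq_top_of_forall_sub_nsmul_mem hK fun x => ?_
  obtain ⟨h, hh, hx⟩ : ψ x ∈ (AddSubgroup.closure (Set.range g)).map ψ := hmap ▸ trivial
  obtain ⟨y, hy⟩ := hker (x - h) (by rw [map_sub, hx, sub_self])
  exact ⟨y, by rwa [← hy, sub_sub_cancel]⟩

theorem minGenerators_eq_finrank [Module.Finite (ZMod p) V] {K : ℕ}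
    (hK : ∀ x : M, p ^ K • x = 0)
    {ψ : M →+ V} (hψ : Function.Surjective ψ) (hker : ∀ x, ψ x = 0 → ∃ y, x = p • y) :
    minGenerators M = Module.finrank (ZMod p) V := by
  obtain ⟨S, hS_card, hS⟩ := exists_card_eq_finrank_closure_eq_top (p := p) hK hψ hker
  refine le_antisymm (Nat.sInf_le ⟨S, hS_card, hS⟩) ?_
  obtain ⟨T, hT_card, hT⟩ := Nat.sInf_mem (⟨_, S, hS_card, hS⟩ :
    {n : ℕ | ∃ S : Finset M, S.card = n ∧ AddSubgroup.closure (S : Set M) = ⊤}.Nonempty)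
  exact (finrank_le_card_of_closure_eq_top hψ hT).trans_eq hT_card

end Generators

namespace Matrix

variable {R m n : Type*} [CommRing R]

theorem rank_neg [Fintype n] (A : Matrix m n R) : (-A).rank = A.rank := by
  rw [← neg_one_smul R A, rank_smul_of_mem_nonZeroDivisors]
  exact isUnit_neg_one.mem_nonZeroDivisors

theorem rank_fromBlocks_zero_zero_zero [StrongRankCondition R] [Fintype m] [Fintype n]
    [DecidableEq m] [DecidableEq n] (B : Matrix m n R) :
    (fromBlocks 0 B 0 0 : Matrix (m ⊕ m) (n ⊕ n) R).rank = B.rank := by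
  refine le_antisymm ?_ ?_
  · have : (fromBlocks 0 B 0 0 : Matrix (m ⊕ m) (n ⊕ n) R) =
        fromRows (1 : Matrix m m R) 0 * B * fromCols (0 : Matrix n n R) 1 := by
      rw [Matrix.mul_assoc, mul_fromCols, fromRows_mul_fromCols]
      simp
    rw [this]
    exact (rank_mul_le_left _ _).trans (rank_mul_le_right _ _)
  · exact rank_submatrix_le (fromBlocks 0 B 0 0) Sum.inl Sum.inr

section Cokernel

variable [Fintype n] [DecidableEq n]

abbrev coker (A : Matrix m n R) : Type _ := (m → R) ⧸ LinearMap.range (toLin' A)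

theorem det_smul_coker_eq_zero (A : Matrix n n R) (x : A.coker) : A.det • x = 0 := by
  induction x using Submodule.Quotient.induction_on with | H y => ?_
  rw [← Submodule.Quotient.mk_smul, Submodule.Quotient.mk_eq_zero]
  exact ⟨A.adjugate *ᵥ y, by rw [toLin'_apply, mulVec_mulVec, mul_adjugate, smul_mulVec,
    one_mulVec]⟩

theorem finrank_coker {K : Type*} [Field K] [Fintype m] (A : Matrix m n K) :
    Module.finrank K A.coker = Fintype.card m - A.rank := by
  have := Submodule.finrank_quotient_add_finrank (LinearMap.range (toLin' A))
  rw [Module.finrank_fintype_fun_eq_card, toLin'_apply'] at this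
  exact Nat.eq_sub_of_add_eq this

section Reduction

variable (p : ℕ) (A : Matrix m n ℤ)

noncomputable def cokerReduction : A.coker →+ (A.map (Int.cast : ℤ → ZMod p)).coker :=
  (Submodule.liftQ _
    ((Submodule.mkQ _).toAddMonoidHom.comp
      ((Int.castRingHom (ZMod p)).compLeft m).toAddMonoidHom).toIntLinearMap
    (by
      rintro _ ⟨v, rfl⟩
      refine (Submodule.Quotient.mk_eq_zero _).mpr ⟨fun j => (v j : ZMod p), funext fun i => ?_⟩
      exact ((Int.castRingHom (ZMod p)).map_mulVec A v i).symm)).toAddMonoidHom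

theorem cokerReduction_surjective : Function.Surjective (cokerReduction p A) := by
  intro y
  induction y using Submodule.Quotient.induction_on with | H y => ?_
  obtain ⟨x, rfl⟩ := (ZMod.intCast_surjective (n := p)).comp_left y
  exact ⟨Submodule.Quotient.mk x, rfl⟩

theorem exists_eq_nsmul_of_cokerReduction_eq_zero {x : A.coker}
    (hx : cokerReduction p A x = 0) : ∃ y, x = p • y := by
  induction x using Submodule.Quotient.induction_on with | H x => ?_
  obtain ⟨w, hw⟩ := (Submodule.Quotient.mk_eq_zero _).mp hx
  obtain ⟨v, rfl⟩ := (ZMod.intCast_surjective (n := p)).comp_left w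
  have hdvd : ∀ i, (p : ℤ) ∣ (x - A *ᵥ v) i := fun i => by
    have hwi : ((A *ᵥ v) i : ZMod p) = x i :=
      ((Int.castRingHom (ZMod p)).map_mulVec A v i).trans (congrFun hw i)
    rw [← ZMod.intCast_zmod_eq_zero_iff_dvd, Pi.sub_apply, Int.cast_sub, sub_eq_zero]
    exact hwi.symm
  choose z hz using hdvd
  refine ⟨Submodule.Quotient.mk z, ?_⟩
  rw [← Submodule.Quotient.mk_smul, Submodule.Quotient.eq]
  refine ⟨v, funext fun i => ?_⟩
  have hzi := hz i
  simp only [Pi.sub_apply] at hzi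
  simp only [toLin'_apply, Pi.sub_apply, nsmul_eq_mul, Pi.mul_apply, Pi.natCast_apply]
  linarith

end Reduction

end Cokernel

theorem minGenerators_coker {p K : ℕ} [Fact p.Prime] [Fintype n] [DecidableEq n]
    (A : Matrix n n ℤ) (hA : A.det ∣ (p : ℤ) ^ K) :
    minGenerators A.coker = Fintype.card n - (A.map (Int.cast : ℤ → ZMod p)).rank := by
  have hK (x : A.coker) : p ^ K • x = 0 := by
    obtain ⟨c, hc⟩ := hA
    rw [← natCast_zsmul, Nat.cast_pow, hc, mul_comm, mul_smul, det_smul_coker_eq_zero, smul_zero]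
  rw [minGenerators_eq_finrank hK (cokerReduction_surjective p A)
    (fun _ => exists_eq_nsmul_of_cokerReduction_eq_zero p A), finrank_coker]

end Matrix

theorem statement18_general (p : ℕ) (hp : p.Prime) (l : ℕ)
    (lam : Fin l → ℕ) (hpos : ∀ i, 0 < lam i)
    (α : Matrix (Fin l) (Fin l) ℤ) :
    minGenerators ((Fin l ⊕ Fin l → ℤ) ⧸ LinearMap.range (Matrix.toLin'
        (Matrix.fromBlocks (Matrix.diagonal fun i => (p : ℤ) ^ lam i) (-α) 0
          (Matrix.diagonal fun i => (p : ℤ) ^ lam i)))) =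
      2 * l - (α.map (Int.cast : ℤ → ZMod p)).rank := by
  have : Fact p.Prime := ⟨hp⟩
  set D : Matrix (Fin l) (Fin l) ℤ := diagonal fun i => (p : ℤ) ^ lam i
  have hdet : (fromBlocks D (-α) 0 D).det ∣ (p : ℤ) ^ (2 * ∑ i, lam i) := by
    rw [det_fromBlocks_zero₂₁, det_diagonal, Finset.prod_pow_eq_pow_sum, two_mul, pow_add]
  have hD : D.map (Int.cast : ℤ → ZMod p) = 0 := by
    rw [diagonal_map Int.cast_zero, ← diagonal_zero]
    congr 1
    funext i
    simp [(hpos i).ne']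
  have hred : (fromBlocks D (-α) 0 D).map (Int.cast : ℤ → ZMod p) =
      fromBlocks 0 (-α.map (Int.cast : ℤ → ZMod p)) 0 0 := by
    rw [fromBlocks_map, hD, Matrix.map_neg _ Int.cast_neg, Matrix.map_zero _ Int.cast_zero]
  rw [minGenerators_coker _ hdet, hred, rank_fromBlocks_zero_zero_zero, rank_neg,
    Fintype.card_sum, Fintype.card_fin, two_mul]

/-- Let `L` be the quotient of `ℤ^{2l}` by the column space of the block matrix
`(p^λ, −α; 0, p^λ)`.  Then the minimal number of generators of the `p`-group `L`
equals `2l − rank_{𝔽_p}(ᾱ)`, where `ᾱ` is the reduction of `α` mod `p`. -/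
theorem statement18 (p : ℕ) (hp : p.Prime) (l : ℕ)
    (lam : Fin l → ℕ) (hpos : ∀ i, 0 < lam i)
    (hmono : ∀ i j : Fin l, i ≤ j → lam j ≤ lam i)
    (α : Matrix (Fin l) (Fin l) ℤ) :
    minGenerators ((Fin l ⊕ Fin l → ℤ) ⧸ LinearMap.range (Matrix.toLin'
        (Matrix.fromBlocks (Matrix.diagonal fun i => (p : ℤ) ^ lam i) (-α) 0
          (Matrix.diagonal fun i => (p : ℤ) ^ lam i)))) =
      2 * l - (α.map (Int.cast : ℤ → ZMod p)).rank :=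
  statement18_general p hp l lam hpos α
end

section
/- Let L be a finite abelian group with symplectic self-duality ∇ and G a maximal isotropic subgroup. Define f : G → L as the inclusion and q : L → dual(G) by q(x)(g) = ∇(g)(x). Then the sequence 0 → G → L → dual(G) → 0 is exact, and the diagram comparing it with its Pontryagin dual 0 → G → dual(L) → dual(G) → 0 (with maps dual(q), dual(f)) commutes with vertical maps (id_G, ∇, −id_{dual(G)}). In particular, ker q = G and q is surjective. -/
/-! Since `∇(x)(x) = 0`, the pairing `(x, y) ↦ ∇(x)(y)` is alternating, hence skew-symmetric.
So `q(x) = 0` says exactly that `∇(x)` kills `G`, i.e. `x ∈ ∇⁻¹(G^⊥) = G`. For surjectivity, a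
character `χ` of `G` extends to a character `c` of `L` because `ℚ/ℤ` is divisible, and then
`q(∇⁻¹(-c)) = χ` by skew-symmetry. -/

theorem apply_apply_eq_neg_of_apply_self {L M F : Type*} [AddCommGroup L] [AddCommGroup M]
    [FunLike F L (L →+ M)] [AddMonoidHomClass F L (L →+ M)] {B : F}
    (hB : ∀ x, B x x = 0) (x y : L) : B x y = -B y x := by
  have h := hB (x + y)
  simp only [map_add, AddMonoidHom.add_apply, hB x, hB y, zero_add, add_zero] at h
  exact eq_neg_of_add_eq_zero_right h

section MaximalIsotropic

variable {L : Type*} [AddCommGroup L] {nabla : L ≃+ (L →+ QZ)} {G : AddSubgroup L}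
  {q : L →+ (G →+ QZ)}

theorem ker_eq_of_comap_perp_eq (hsymp : ∀ x, nabla x x = 0)
    (hmax : AddSubgroup.comap nabla.toAddMonoidHom (perp G) = G)
    (hq : ∀ (x : L) (g : G), q x g = nabla (g : L) x) : q.ker = G := by
  ext x
  calc x ∈ q.ker ↔ ∀ g : G, nabla (g : L) x = 0 := by
        simp only [AddMonoidHom.mem_ker, DFunLike.ext_iff, hq, AddMonoidHom.zero_apply]
    _ ↔ ∀ g ∈ G, nabla x g = 0 := by
        simp only [Subtype.forall, apply_apply_eq_neg_of_apply_self hsymp x, neg_eq_zero]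
    _ ↔ x ∈ AddSubgroup.comap nabla.toAddMonoidHom (perp G) := Iff.rfl
    _ ↔ x ∈ G := by rw [hmax]

theorem surjective_of_apply_eq (hsymp : ∀ x, nabla x x = 0)
    (hq : ∀ (x : L) (g : G), q x g = nabla (g : L) x) : Function.Surjective q := by
  intro χ
  obtain ⟨c, hc⟩ := (Module.Baer.of_divisible QZ).extension_property_addMonoidHom
    G.subtype G.subtype_injective (-χ)
  refine ⟨nabla.symm c, AddMonoidHom.ext fun g => ?_⟩
  rw [hq, apply_apply_eq_neg_of_apply_self hsymp, AddEquiv.apply_symm_apply, neg_eq_iff_eq_neg,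
    ← AddMonoidHom.neg_apply, ← hc]
  rfl

end MaximalIsotropic

theorem statement19_general (L : Type) [AddCommGroup L]
    (nabla : L ≃+ (L →+ QZ)) (hsymp : ∀ x : L, nabla x x = 0)
    (G : AddSubgroup L)
    (hmax : AddSubgroup.comap nabla.toAddMonoidHom (perp G) = G)
    (q : L →+ (G →+ QZ))
    (hq : ∀ (x : L) (g : G), q x g = nabla (g : L) x) :
    Function.Injective G.subtype ∧
    q.ker = G ∧
    Function.Surjective q ∧
    (∀ (g : G) (x : L), nabla (G.subtype g) x = q x g) ∧
    (∀ (x : L) (g : G), nabla x (G.subtype g) = -(q x g)) :=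
  ⟨G.subtype_injective, ker_eq_of_comap_perp_eq hsymp hmax hq, surjective_of_apply_eq hsymp hq,
    fun g x => (hq x g).symm,
    fun x g => (hq x g).symm ▸ apply_apply_eq_neg_of_apply_self hsymp x g⟩

/-- For a maximal isotropic subgroup `G` of a finite abelian group `L` with symplectic
self-duality `∇`, with `f : G → L` the inclusion and `q : L → dual G` given by
`q(x)(g) = ∇(g)(x)`, the sequence `0 → G → L → dual G → 0` is exact (`f` injective,
`ker q = G`, `q` surjective), and the comparison diagram with the dual sequence
commutes with vertical maps `(id_G, ∇, −id_{dual G})`: the left square is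
`∇(f(g))(x) = q(x)(g)` and the right square is `∇(x)(f(g)) = −q(x)(g)`. -/
theorem statement19 (L : Type) [AddCommGroup L] [Fintype L]
    (nabla : L ≃+ (L →+ QZ)) (hsymp : ∀ x : L, nabla x x = 0)
    (G : AddSubgroup L)
    (hmax : AddSubgroup.comap nabla.toAddMonoidHom (perp G) = G)
    (q : L →+ (G →+ QZ))
    (hq : ∀ (x : L) (g : G), q x g = nabla (g : L) x) :
    Function.Injective G.subtype ∧
    q.ker = G ∧
    Function.Surjective q ∧
    (∀ (g : G) (x : L), nabla (G.subtype g) x = q x g) ∧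
    (∀ (x : L) (g : G), nabla x (G.subtype g) = -(q x g)) :=
  statement19_general L nabla hsymp G hmax q hq
end
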